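/- arXiv:1903.10943 — 6 statements merged into one kernel-verified Lean document; each statement's English description precedes it below -/
import Mathlib

section
/- Let E be a finite set of continuous functions ℝ → ℝ such that any two distinct f, g ∈ E cross exactly once (there is exactly one x₀ with f(x₀) = g(x₀), and there exist a, b with f(a) < g(a) and g(b) < f(b)). Then for every f ∈ E, the set {x ∈ ℝ : f(x) ≤ g(x) for all g ∈ E} of abscissas at which f attains the lower envelope of E is order-connected (an interval); in particular, every pseudo-line contributes at most one connected segment to the lower envelope of E. -/
/-- In a finite family of continuous pseudo-lines in which every two distinct
members cross exactly once, the set of abscissas at which a given member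
attains the lower envelope is order-connected (an interval); in particular
every pseudo-line contributes at most one connected segment to the lower
envelope. -/
theorem stmt_1 (E : Finset (ℝ → ℝ))
    (hcont : ∀ f ∈ E, Continuous f)
    (hcross : ∀ f ∈ E, ∀ g ∈ E, f ≠ g →
      (∃! x₀ : ℝ, f x₀ = g x₀) ∧ (∃ a : ℝ, f a < g a) ∧ (∃ b : ℝ, g b < f b))
    (f : ℝ → ℝ) (hf : f ∈ E) :
    {x : ℝ | ∀ g ∈ E, f x ≤ g x}.OrdConnected := by
  constructor
  intro x hx y hy z hz
  simp only [Set.mem_setOf_eq] at hx hy ⊢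
  intro g hg
  by_contra h
  push_neg at h
  have hfg : f ≠ g := fun he => absurd (he ▸ h) (lt_irrefl _)
  obtain ⟨⟨x₀, hx₀, huniq⟩, -, -⟩ := hcross f hf g hg hfg
  have hc : Continuous (f - g) := (hcont f hf).sub (hcont g hg)
  have h1 : (0 : ℝ) ∈ Set.Icc ((f - g) x) ((f - g) z) := by
    constructor
    · simpa [sub_nonpos] using hx g hg
    · simpa [sub_nonneg] using h.le
  have h2 : (0 : ℝ) ∈ Set.Icc ((f - g) y) ((f - g) z) := by
    constructor
    · simpa [sub_nonpos] using hy g hg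
    · simpa [sub_nonneg] using h.le
  obtain ⟨c, hcmem, hceq⟩ := intermediate_value_Icc hz.1 hc.continuousOn h1
  obtain ⟨d, hdmem, hdeq⟩ := intermediate_value_Icc' hz.2 hc.continuousOn h2
  have hczero : f c = g c := sub_eq_zero.mp hceq
  have hdzero : f d = g d := sub_eq_zero.mp hdeq
  have hcz : c ≠ z := fun he => h.ne' (he ▸ hczero)
  have hdz : d ≠ z := fun he => h.ne' (he ▸ hdzero)
  have hcd : c = d := (huniq c hczero).trans (huniq d hdzero).symm
  have : c < z := lt_of_le_of_ne hcmem.2 hcz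
  have : z < d := lt_of_le_of_ne hdmem.1 (Ne.symm hdz)
  linarith [hcd]
end

section
/- Let A and B be finite nonempty sets of continuous functions ℝ → ℝ such that for every f ∈ A and g ∈ B there is exactly one x₀(f,g) with f(x₀(f,g)) = g(x₀(f,g)), f(x) < g(x) for all x < x₀(f,g), and g(x) < f(x) for all x > x₀(f,g) (every pseudo-line of A lies below every pseudo-line of B at x = −∞). Let p, q ∈ ℝ² be points such that p lies on or above some f ∈ A (i.e. f(p_x) ≤ p_y) and strictly below every g ∈ B (i.e. p_y < g(p_x) for all g ∈ B), while q lies on or above some g ∈ B and strictly below every f ∈ A. Then p_x < q_x, i.e. p lies strictly to the left of q. -/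
/-- If every pseudo-line of the family `A` lies below every pseudo-line of the
family `B` at `x = -∞` (they cross exactly once, with the `A`-member below to
the left), then any point `p` lying on or above some member of `A` and
strictly below all members of `B` is strictly to the left of any point `q`
lying on or above some member of `B` and strictly below all members of `A`. -/
theorem stmt_3 (A B : Finset (ℝ → ℝ)) (hA : A.Nonempty) (hB : B.Nonempty)
    (hcontA : ∀ f ∈ A, Continuous f) (hcontB : ∀ g ∈ B, Continuous g)
    (hcross : ∀ f ∈ A, ∀ g ∈ B, ∃ x₀ : ℝ,
      (∀ x : ℝ, f x = g x ↔ x = x₀) ∧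
      (∀ x < x₀, f x < g x) ∧ (∀ x > x₀, g x < f x))
    (p q : ℝ × ℝ)
    (hpA : ∃ f ∈ A, f p.1 ≤ p.2) (hpB : ∀ g ∈ B, p.2 < g p.1)
    (hqB : ∃ g ∈ B, g q.1 ≤ q.2) (hqA : ∀ f ∈ A, q.2 < f q.1) :
    p.1 < q.1 := by
  obtain ⟨f, hf, hfp⟩ := hpA
  obtain ⟨g, hg, hgq⟩ := hqB
  obtain ⟨x₀, heq, hlt, hgt⟩ := hcross f hf g hg
  have h1 : f p.1 < g p.1 := lt_of_le_of_lt hfp (hpB g hg)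
  have h2 : g q.1 < f q.1 := lt_of_le_of_lt hgq (hqA f hf)
  have hp : p.1 < x₀ := by
    rcases lt_trichotomy p.1 x₀ with h | h | h
    · exact h
    · exact absurd ((heq p.1).2 h) h1.ne
    · exact absurd (hgt _ h) h1.asymm
  have hq : x₀ < q.1 := by
    rcases lt_trichotomy q.1 x₀ with h | h | h
    · exact absurd (hlt _ h) h2.asymm
    · exact absurd ((heq q.1).2 h) h2.ne'
    · exact h
  linarith
end

section
/- If c ∈ Q_t and p ∈ B satisfy ‖p − c‖ = 1, then c_y ≥ o_y + 1/(2√2) (the center c lies on or above the line supporting the top edge of B) and p_y < c_y; that is, every point of B lying on the unit circle around a center in Q_t lies on the open lower semicircle of that circle. -/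
noncomputable section

/-- The plane. -/
abbrev E2 := EuclideanSpace ℝ (Fin 2)

/-- The closed axis-parallel square centered at `o` with diagonal of length 1. -/
def Bsq (o : E2) : Set E2 :=
  {p | |p 0 - o 0| ≤ 1 / (2 * Real.sqrt 2) ∧ |p 1 - o 1| ≤ 1 / (2 * Real.sqrt 2)}

/-- The top quadrant determined by the two diagonal lines of the square. -/
def Qt (o : E2) : Set E2 := {q | |q 0 - o 0| ≤ q 1 - o 1}

/-- Every point of `B` lying on the unit circle around a center `c ∈ Q_t` lies
on the open lower semicircle of that circle; moreover `c` lies on or above the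
line supporting the top edge of `B`. -/
theorem stmt_4 (o c p : E2) (hc : c ∈ Qt o) (hp : p ∈ Bsq o)
    (hpc : ‖p - c‖ = 1) :
    o 1 + 1 / (2 * Real.sqrt 2) ≤ c 1 ∧ p 1 < c 1 := by
  have h2 : Real.sqrt 2 ^ 2 = 2 := Real.sq_sqrt (by norm_num)
  have h2p : 0 < Real.sqrt 2 := Real.sqrt_pos.2 (by norm_num)
  set a : ℝ := 1 / (2 * Real.sqrt 2) with ha_def
  have hap : 0 < a := by positivity
  have ha2 : a ^ 2 = 1 / 8 := by
    rw [ha_def, div_pow, mul_pow, h2]; norm_num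
  obtain ⟨hpx, hpy⟩ := hp
  have hcq : |c 0 - o 0| ≤ c 1 - o 1 := hc
  have hsum : (p 0 - c 0) ^ 2 + (p 1 - c 1) ^ 2 = 1 := by
    have h := hpc
    rw [EuclideanSpace.norm_eq] at h
    simp only [Fin.sum_univ_two, Real.norm_eq_abs, sq_abs, PiLp.sub_apply] at h
    have hnn : (0:ℝ) ≤ (p 0 - c 0) ^ 2 + (p 1 - c 1) ^ 2 := by positivity
    nlinarith [Real.sq_sqrt hnn, h]
  rw [abs_le] at hpx hpy hcq
  obtain ⟨hpx1, hpx2⟩ := hpx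
  obtain ⟨hpy1, hpy2⟩ := hpy
  obtain ⟨hcq1, hcq2⟩ := hcq
  have hd0 : 0 ≤ c 1 - o 1 := by linarith
  have h1 : o 1 + a ≤ c 1 := by
    by_contra hlt
    push_neg at hlt
    have hx : (0:ℝ) ≤ (a + (c 1 - o 1) - (p 0 - c 0)) * (a + (c 1 - o 1) + (p 0 - c 0)) := by
      apply mul_nonneg <;> linarith
    have hy : (0:ℝ) ≤ (a + (c 1 - o 1) - (p 1 - c 1)) * (a + (c 1 - o 1) + (p 1 - c 1)) := by
      apply mul_nonneg <;> linarith
    nlinarith [hx, hy, ha2, mul_pos (show (0:ℝ) < a - (c 1 - o 1) by linarith)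
      (show (0:ℝ) < 3 * a + (c 1 - o 1) by linarith)]
  refine ⟨h1, ?_⟩
  by_contra hge
  push_neg at hge
  have hpeq : p 1 = c 1 := le_antisymm (by linarith) hge
  have hy0 : (p 1 - c 1) ^ 2 = 0 := by rw [hpeq]; ring
  have hx : (0:ℝ) ≤ (a + (c 1 - o 1) - (p 0 - c 0)) * (a + (c 1 - o 1) + (p 0 - c 0)) := by
    apply mul_nonneg <;> linarith
  have hda : c 1 - o 1 ≤ a := by
    have : p 1 - o 1 ≤ a := hpy2
    linarith [hpeq ▸ this]
  nlinarith [hx, ha2, hy0, hda, hd0]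
end
end

section
/- Let c ∈ Q_t and p ∈ B with ‖p − c‖ = 1, and let q ∈ B satisfy q_x = p_x and q_y > p_y. Then ‖q − c‖ < 1. Consequently, if c belongs to a finite set S ⊆ ℝ² and U = ⋃_{s ∈ S} D(s) is the union of the closed unit discs centered at the points of S, then q lies in the interior of U and hence q does not lie on the frontier (boundary) of U; thus the x-projections of the relative interiors of boundary arcs of U inside B whose disc centers lie in Q_t are pairwise disjoint. -/
noncomputable section

/-- Moving vertically upward inside `B` from a point of the unit circle around
a center `c ∈ Q_t` enters the open unit disc of `c`; hence such a point lies
in the interior of the union of unit discs around any finite set of centers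
containing `c`, and not on its frontier.  Thus the `x`-projections of the
relative interiors of boundary arcs of the union inside `B` with centers in
`Q_t` are pairwise disjoint. -/
theorem stmt_5 (o c p q : E2) (hc : c ∈ Qt o) (hp : p ∈ Bsq o)
    (hpc : ‖p - c‖ = 1) (hq : q ∈ Bsq o) (hqx : q 0 = p 0) (hqy : p 1 < q 1) :
    ‖q - c‖ < 1 ∧
    ∀ S : Finset E2, c ∈ S →
      q ∈ interior (⋃ s ∈ S, Metric.closedBall s 1) ∧
      q ∉ frontier (⋃ s ∈ S, Metric.closedBall s 1) := by
  have hsq : ∀ x y : E2, ‖x - y‖ ^ 2 = (x 0 - y 0) ^ 2 + (x 1 - y 1) ^ 2 := by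
    intro x y
    rw [EuclideanSpace.norm_eq, Real.sq_sqrt (by positivity)]
    simp [Fin.sum_univ_two, sq_abs]
  set r : ℝ := 1 / (2 * Real.sqrt 2) with hr
  have hr2 : r ^ 2 = 1 / 8 := by
    have h2 : Real.sqrt 2 ^ 2 = 2 := Real.sq_sqrt (by norm_num)
    rw [hr]
    field_simp
    nlinarith [Real.sqrt_nonneg 2]
  obtain ⟨hp0, hp1⟩ := hp
  obtain ⟨hq0, hq1⟩ := hq
  have hc' : |c 0 - o 0| ≤ c 1 - o 1 := hc
  have h1 : (p 0 - c 0) ^ 2 + (p 1 - c 1) ^ 2 = 1 := by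
    have := hsq p c; rw [hpc] at this; linarith
  rw [abs_le] at hp0 hp1 hq0 hq1
  obtain ⟨hc1, hc2⟩ := abs_le.mp hc'
  have hcy : o 1 + r ≤ c 1 := by
    by_contra h
    push_neg at h
    nlinarith [hr2, h1, Real.sqrt_nonneg 2]
  have key : ‖q - c‖ < 1 := by
    have hq2 : (q 0 - c 0) ^ 2 + (q 1 - c 1) ^ 2 < 1 := by
      have e0 : q 0 - c 0 = p 0 - c 0 := by rw [hqx]
      rw [e0]
      nlinarith [h1, hcy, hq1.2, hqy]
    have := hsq q c
    nlinarith [norm_nonneg (q - c)]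
  refine ⟨key, fun S hcS => ?_⟩
  have hqball : q ∈ Metric.ball c 1 := by
    simpa [Metric.mem_ball, dist_eq_norm] using key
  have hsub : Metric.ball c 1 ⊆ ⋃ s ∈ S, Metric.closedBall s 1 :=
    Metric.ball_subset_closedBall.trans
      (Set.subset_biUnion_of_mem (u := fun s => Metric.closedBall s 1) hcS)
  have hint : q ∈ interior (⋃ s ∈ S, Metric.closedBall s 1) :=
    interior_maximal hsub Metric.isOpen_ball hqball
  exact ⟨hint, fun h => h.2 hint⟩
end
end

section
/- Let e₁, e₂, e₃ be lower arcs contained in B with centers c₁, c₂, c₃ ∈ Q_t, such that the arcs are x-ordered: the right endpoint of e₁ has x-coordinate at most the x-coordinate of the left endpoint of e₂, and the right endpoint of e₂ has x-coordinate at most the x-coordinate of the left endpoint of e₃. Assume in addition that every point of e₁ and every point of e₃ lies at distance ≥ 1 from c₂. If a point q ∈ ℝ² satisfies q_x ∈ dom(G_{e₁}) ∩ dom(G_{e₃}), q_y ≤ G_{e₁}(q_x) and q_y ≤ G_{e₃}(q_x) (q lies below the upper curves of e₁ and of e₃), then q_x ∈ dom(G_{e₂}) and q_y ≤ G_{e₂}(q_x)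 (q also lies below the upper curve of e₂). -/
noncomputable section

/-- A lower circular arc of unit radius: center `c`, endpoints `p₁, p₂` on the
unit circle around `c`, both not above `c`, with `p₁` strictly left of `p₂`. -/
structure LowerArc where
  c : E2
  p₁ : E2
  p₂ : E2
  h₁ : ‖p₁ - c‖ = 1
  h₂ : ‖p₂ - c‖ = 1
  hy₁ : p₁ 1 ≤ c 1
  hy₂ : p₂ 1 ≤ c 1
  hx : p₁ 0 < p₂ 0

/-- The set of points of a lower arc. -/
def LowerArc.pts (e : LowerArc) : Set E2 :=
  {p | ‖p - e.c‖ = 1 ∧ e.p₁ 0 ≤ p 0 ∧ p 0 ≤ e.p₂ 0 ∧ p 1 ≤ e.c 1}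

/-- The domain of the upper/lower curves of a lower arc. -/
def LowerArc.dom (e : LowerArc) : Set ℝ := Set.Icc (e.p₁ 0 - 1) (e.p₂ 0 + 1)

/-- The upper curve of a lower arc: the upper boundary of its Minkowski sum
with a closed unit disc. -/
def LowerArc.G (e : LowerArc) (x : ℝ) : ℝ :=
  sSup {y : ℝ | ∃ s ∈ e.pts, |x - s 0| ≤ 1 ∧ y = s 1 + Real.sqrt (1 - (x - s 0) ^ 2)}

/-! ### Auxiliary lemmas -/

private lemma norm_sq_expr (p c : E2) :
    ‖p - c‖ ^ 2 = (p 0 - c 0) ^ 2 + (p 1 - c 1) ^ 2 := by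
  rw [EuclideanSpace.norm_eq, Real.sq_sqrt (by positivity)]
  simp [Fin.sum_univ_two, Real.norm_eq_abs, sq_abs]

private lemma sq_sum_of_norm_eq {p c : E2} (h : ‖p - c‖ = 1) :
    (p 0 - c 0) ^ 2 + (p 1 - c 1) ^ 2 = 1 := by
  have h2 : ‖p - c‖ ^ 2 = 1 := by rw [h]; norm_num
  rwa [norm_sq_expr] at h2

private lemma key_ineq (q s δ a1 a2 a3 a4 : ℝ)
    (hδ : 0 ≤ δ) (hκ : 0 ≤ q + s + δ)
    (h1 : a1 ^ 2 = 1 - (s + δ) ^ 2) (h2 : a2 ^ 2 = 1 - q ^ 2)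
    (h3 : a3 ^ 2 = 1 - s ^ 2) (h4 : a4 ^ 2 = 1 - (q + δ) ^ 2)
    (n1 : 0 ≤ a1) (n2 : 0 ≤ a2) (n3 : 0 ≤ a3) (n4 : 0 ≤ a4) :
    a1 + a4 ≤ a2 + a3 := by
  have hq1 : q ^ 2 ≤ 1 := by nlinarith [sq_nonneg a2]
  have hs1 : s ^ 2 ≤ 1 := by nlinarith [sq_nonneg a3]
  have hqs : q * s ≤ 1 := by nlinarith [sq_nonneg (q - s)]
  have hKnn : 0 ≤ (q + s + δ) * δ := mul_nonneg hκ hδ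
  have hid : (a2 * a3) ^ 2 + ((q + s + δ) * δ) ^ 2 - (a1 * a4) ^ 2
      = 2 * δ * (q + s + δ) * (1 - q * s) := by
    have e1 : (a1 * a4) ^ 2 = (1 - (s + δ) ^ 2) * (1 - (q + δ) ^ 2) := by
      rw [mul_pow, h1, h4]
    have e2 : (a2 * a3) ^ 2 = (1 - q ^ 2) * (1 - s ^ 2) := by
      rw [mul_pow, h2, h3]
    rw [e1, e2]; ring
  have hsq : (a1 * a4) ^ 2 ≤ (a2 * a3 + (q + s + δ) * δ) ^ 2 := by
    nlinarith [mul_nonneg (mul_nonneg n2 n3) hKnn,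
      mul_nonneg (mul_nonneg hδ hκ) (by nlinarith : (0:ℝ) ≤ 1 - q * s)]
  have step : a1 * a4 ≤ a2 * a3 + (q + s + δ) * δ :=
    le_of_pow_le_pow_left₀ two_ne_zero (add_nonneg (mul_nonneg n2 n3) hKnn) hsq
  have hsum : (a1 + a4) ^ 2 ≤ (a2 + a3) ^ 2 := by nlinarith [step]
  exact le_of_pow_le_pow_left₀ two_ne_zero (add_nonneg n2 n3) hsum

private lemma IR (cx cy u Sx Sy x : ℝ) (hSy : Sy ≤ cy)
    (hfar : 1 ≤ (Sx - cx) ^ 2 + (Sy - cy) ^ 2) (hSu : Sx ≤ u)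
    (h1 : (x - Sx) ^ 2 ≤ 1) (h2 : (x - u) ^ 2 ≤ 1) (h3 : (u - cx) ^ 2 ≤ 1)
    (hcx : cx ≤ x) :
    Sy + Real.sqrt (1 - (x - Sx) ^ 2)
      ≤ cy - Real.sqrt (1 - (u - cx) ^ 2) + Real.sqrt (1 - (x - u) ^ 2) := by
  have hxS1 : x - Sx ≤ 1 := by nlinarith
  have hu1 : u - cx ≤ 1 := by nlinarith
  have hSx2 : (Sx - cx) ^ 2 ≤ 1 := by nlinarith
  set a1 := Real.sqrt (1 - (x - Sx) ^ 2) with ha1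
  set a2 := Real.sqrt (1 - (Sx - cx) ^ 2) with ha2
  set a3 := Real.sqrt (1 - (x - u) ^ 2) with ha3
  set a4 := Real.sqrt (1 - (u - cx) ^ 2) with ha4
  have n1 : 0 ≤ a1 := Real.sqrt_nonneg _
  have n2 : 0 ≤ a2 := Real.sqrt_nonneg _
  have n3 : 0 ≤ a3 := Real.sqrt_nonneg _
  have n4 : 0 ≤ a4 := Real.sqrt_nonneg _
  have q1 : a1 ^ 2 = 1 - (x - Sx) ^ 2 := Real.sq_sqrt (by linarith)
  have q2 : a2 ^ 2 = 1 - (Sx - cx) ^ 2 := Real.sq_sqrt (by linarith)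
  have q3 : a3 ^ 2 = 1 - (x - u) ^ 2 := Real.sq_sqrt (by linarith)
  have q4 : a4 ^ 2 = 1 - (u - cx) ^ 2 := Real.sq_sqrt (by linarith)
  -- Step A : a2 ≤ cy - Sy
  have hA : a2 ≤ cy - Sy := by
    have h5 : 1 - (Sx - cx) ^ 2 ≤ (cy - Sy) ^ 2 := by nlinarith
    calc a2 ≤ Real.sqrt ((cy - Sy) ^ 2) := Real.sqrt_le_sqrt h5
      _ = cy - Sy := Real.sqrt_sq (by linarith)
  -- Step B : a1 + a4 ≤ a2 + a3
  have hB : a1 + a4 ≤ a2 + a3 := by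
    refine key_ineq (Sx - cx) (x - u) (u - Sx) a1 a2 a3 a4 (by linarith)
      (by linarith) ?_ q2 q3 ?_ n1 n2 n3 n4
    · rw [q1]; ring_nf
    · rw [q4]; ring_nf
  linarith

private lemma IL (cx cy u Tx Ty x : ℝ) (hTy : Ty ≤ cy)
    (hfar : 1 ≤ (Tx - cx) ^ 2 + (Ty - cy) ^ 2) (hTu : u ≤ Tx)
    (h1 : (x - Tx) ^ 2 ≤ 1) (h2 : (x - u) ^ 2 ≤ 1) (h3 : (u - cx) ^ 2 ≤ 1)
    (hcx : x ≤ cx) :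
    Ty + Real.sqrt (1 - (x - Tx) ^ 2)
      ≤ cy - Real.sqrt (1 - (u - cx) ^ 2) + Real.sqrt (1 - (x - u) ^ 2) := by
  have h := IR (-cx) cy (-u) (-Tx) Ty (-x) hTy (by nlinarith) (by linarith)
    (by nlinarith) (by nlinarith) (by nlinarith) (by linarith)
  have e1 : (-x - -Tx) ^ 2 = (x - Tx) ^ 2 := by ring
  have e2 : (-x - -u) ^ 2 = (x - u) ^ 2 := by ring
  have e3 : (-u - -cx) ^ 2 = (u - cx) ^ 2 := by ring
  rw [e1, e2, e3] at h
  exact h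

private lemma chigh (px py cx cy ox oy : ℝ)
    (hcirc : (px - cx) ^ 2 + (py - cy) ^ 2 = 1) (hpy : py ≤ cy)
    (hbx : |px - ox| ≤ 1 / (2 * Real.sqrt 2)) (hby : |py - oy| ≤ 1 / (2 * Real.sqrt 2))
    (hQ : |cx - ox| ≤ cy - oy) :
    oy + 1 / (2 * Real.sqrt 2) ≤ cy := by
  set a : ℝ := 1 / (2 * Real.sqrt 2) with ha
  have hs2 : Real.sqrt 2 ^ 2 = 2 := Real.sq_sqrt (by norm_num)
  have hs2p : 0 < Real.sqrt 2 := Real.sqrt_pos.mpr (by norm_num)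
  have hap : 0 < a := by rw [ha]; positivity
  have ha2 : a ^ 2 = 1 / 8 := by
    rw [ha, div_pow, mul_pow, hs2]; norm_num
  rw [abs_le] at hbx hby hQ
  by_contra hcon
  push_neg at hcon
  have ht0 : 0 ≤ cy - oy := by linarith [hQ.1, hQ.2]
  have e1 : (px - cx) ^ 2 ≤ (a + (cy - oy)) ^ 2 :=
    sq_le_sq' (by linarith [hbx.1, hQ.2]) (by linarith [hbx.2, hQ.1])
  have e2 : (py - cy) ^ 2 ≤ (a + (cy - oy)) ^ 2 :=
    sq_le_sq' (by linarith [hby.1]) (by linarith)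
  have e3 : (a + (cy - oy)) ^ 2 < 4 * a ^ 2 := by
    nlinarith [mul_pos (show (0:ℝ) < a - (cy - oy) by linarith)
      (show (0:ℝ) < 3 * a + (cy - oy) by linarith)]
  linarith

set_option maxHeartbeats 1000000 in
/-- For three `x`-ordered lower arcs in `B` with centers in `Q_t` (the outer
two avoiding the open unit disc around the middle center), any point lying
below the upper curves of the outer arcs also lies below the upper curve of
the middle arc. -/
theorem stmt_8 (o : E2) (e₁ e₂ e₃ : LowerArc)
    (hB₁ : e₁.pts ⊆ Bsq o) (hB₂ : e₂.pts ⊆ Bsq o) (hB₃ : e₃.pts ⊆ Bsq o)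
    (hc₁ : e₁.c ∈ Qt o) (hc₂ : e₂.c ∈ Qt o) (hc₃ : e₃.c ∈ Qt o)
    (hord₁₂ : e₁.p₂ 0 ≤ e₂.p₁ 0) (hord₂₃ : e₂.p₂ 0 ≤ e₃.p₁ 0)
    (hfar₁ : ∀ s ∈ e₁.pts, 1 ≤ ‖s - e₂.c‖) (hfar₃ : ∀ s ∈ e₃.pts, 1 ≤ ‖s - e₂.c‖)
    (q : E2) (hq₁ : q 0 ∈ e₁.dom) (hq₃ : q 0 ∈ e₃.dom)
    (hb₁ : q 1 ≤ e₁.G (q 0)) (hb₃ : q 1 ≤ e₃.G (q 0)) :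
    q 0 ∈ e₂.dom ∧ q 1 ≤ e₂.G (q 0) := by
  simp only [LowerArc.dom, Set.mem_Icc] at hq₁ hq₃ ⊢
  obtain ⟨hq1l, hq1r⟩ := hq₁
  obtain ⟨hq3l, hq3r⟩ := hq₃
  have hAB : e₂.p₁ 0 ≤ e₂.p₂ 0 := le_of_lt e₂.hx
  have h12 : e₁.p₁ 0 ≤ e₁.p₂ 0 := le_of_lt e₁.hx
  have h32 : e₃.p₁ 0 ≤ e₃.p₂ 0 := le_of_lt e₃.hx
  have hxu : q 0 ≤ e₂.p₁ 0 + 1 := by linarith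
  have hxl : e₂.p₂ 0 - 1 ≤ q 0 := by linarith
  refine ⟨⟨by linarith, by linarith⟩, ?_⟩
  -- basic facts about e₂
  have c2p1 := sq_sum_of_norm_eq e₂.h₁
  have c2p2 := sq_sum_of_norm_eq e₂.h₂
  have hp1mem : e₂.p₁ ∈ e₂.pts := by
    simp only [LowerArc.pts, Set.mem_setOf_eq]
    exact ⟨e₂.h₁, le_refl _, hAB, e₂.hy₁⟩
  have hp2mem : e₂.p₂ ∈ e₂.pts := by
    simp only [LowerArc.pts, Set.mem_setOf_eq]
    exact ⟨e₂.h₂, hAB, le_refl _, e₂.hy₂⟩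
  have hbox1 : |e₂.p₁ 0 - o 0| ≤ 1 / (2 * Real.sqrt 2) ∧
      |e₂.p₁ 1 - o 1| ≤ 1 / (2 * Real.sqrt 2) := hB₂ hp1mem
  have hQ2 : |e₂.c 0 - o 0| ≤ e₂.c 1 - o 1 := hc₂
  have hcy : o 1 + 1 / (2 * Real.sqrt 2) ≤ e₂.c 1 :=
    chigh (e₂.p₁ 0) (e₂.p₁ 1) (e₂.c 0) (e₂.c 1) (o 0) (o 1) c2p1 e₂.hy₁
      hbox1.1 hbox1.2 hQ2
  -- boundedness of the defining set of `e₂.G (q 0)`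
  have hbdd : BddAbove {y : ℝ | ∃ s ∈ e₂.pts, |q 0 - s 0| ≤ 1 ∧
      y = s 1 + Real.sqrt (1 - (q 0 - s 0) ^ 2)} := by
    refine ⟨o 1 + 1 / (2 * Real.sqrt 2) + 1, ?_⟩
    rintro y ⟨s, hs, hxs, rfl⟩
    have hsB : |s 0 - o 0| ≤ 1 / (2 * Real.sqrt 2) ∧
        |s 1 - o 1| ≤ 1 / (2 * Real.sqrt 2) := hB₂ hs
    have h1 : Real.sqrt (1 - (q 0 - s 0) ^ 2) ≤ 1 := by
      calc Real.sqrt (1 - (q 0 - s 0) ^ 2) ≤ Real.sqrt 1 :=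
            Real.sqrt_le_sqrt (by nlinarith [sq_nonneg (q 0 - s 0)])
        _ = 1 := Real.sqrt_one
    have h2 := (abs_le.mp hsB.2).2
    linarith
  simp only [LowerArc.G] at hb₁ hb₃ ⊢
  refine le_of_forall_pos_le_add ?_
  intro ε hε
  rcases le_total (e₂.c 0) (q 0) with hside | hside
  · -- use the witness from e₁ and the right endpoint of e₂
    have hne1 : Set.Nonempty {y : ℝ | ∃ s ∈ e₁.pts, |q 0 - s 0| ≤ 1 ∧
        y = s 1 + Real.sqrt (1 - (q 0 - s 0) ^ 2)} := by
      refine ⟨e₁.p₂ 1 + Real.sqrt (1 - (q 0 - e₁.p₂ 0) ^ 2), e₁.p₂, ?_, ?_, rfl⟩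
      · simp only [LowerArc.pts, Set.mem_setOf_eq]
        exact ⟨e₁.h₂, h12, le_refl _, e₁.hy₂⟩
      · exact abs_le.mpr ⟨by linarith, by linarith⟩
    obtain ⟨y, hy, hylt⟩ := exists_lt_of_lt_csSup hne1
      (show q 1 - ε < _ by linarith)
    obtain ⟨s, hs, hxs, rfl⟩ := hy
    have hsmem := hs
    simp only [LowerArc.pts, Set.mem_setOf_eq] at hsmem
    have hsB : |s 0 - o 0| ≤ 1 / (2 * Real.sqrt 2) ∧
        |s 1 - o 1| ≤ 1 / (2 * Real.sqrt 2) := hB₁ hs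
    have hfarS : 1 ≤ (s 0 - e₂.c 0) ^ 2 + (s 1 - e₂.c 1) ^ 2 := by
      have h := hfar₁ s hs
      have h2 : 1 ≤ ‖s - e₂.c‖ ^ 2 := by nlinarith [norm_nonneg (s - e₂.c), h]
      rwa [norm_sq_expr] at h2
    have hSy : s 1 ≤ e₂.c 1 := by
      have := (abs_le.mp hsB.2).2; linarith
    have hSu : s 0 ≤ e₂.p₂ 0 := by linarith [hsmem.2.2.1]
    have h1s : (q 0 - s 0) ^ 2 ≤ 1 := (sq_le_one_iff_abs_le_one _).mpr hxs
    have h2s : (q 0 - e₂.p₂ 0) ^ 2 ≤ 1 :=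
      (sq_le_one_iff_abs_le_one _).mpr (abs_le.mpr ⟨by linarith, by linarith⟩)
    have h3s : (e₂.p₂ 0 - e₂.c 0) ^ 2 ≤ 1 := by
      linarith [sq_nonneg (e₂.p₂ 1 - e₂.c 1), c2p2]
    have hIR := IR (e₂.c 0) (e₂.c 1) (e₂.p₂ 0) (s 0) (s 1) (q 0)
      hSy hfarS hSu h1s h2s h3s hside
    have hval : Real.sqrt (1 - (e₂.p₂ 0 - e₂.c 0) ^ 2) = e₂.c 1 - e₂.p₂ 1 := by
      have hh : 1 - (e₂.p₂ 0 - e₂.c 0) ^ 2 = (e₂.c 1 - e₂.p₂ 1) ^ 2 := by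
        linear_combination -c2p2
      rw [hh, Real.sqrt_sq (by linarith [e₂.hy₂])]
    rw [hval] at hIR
    have hmem : e₂.p₂ 1 + Real.sqrt (1 - (q 0 - e₂.p₂ 0) ^ 2) ∈
        {y : ℝ | ∃ s ∈ e₂.pts, |q 0 - s 0| ≤ 1 ∧
          y = s 1 + Real.sqrt (1 - (q 0 - s 0) ^ 2)} :=
      ⟨e₂.p₂, hp2mem, abs_le.mpr ⟨by linarith, by linarith⟩, rfl⟩
    have hle2 := le_csSup hbdd hmem
    linarith
  · -- use the witness from e₃ and the left endpoint of e₂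
    have hne3 : Set.Nonempty {y : ℝ | ∃ s ∈ e₃.pts, |q 0 - s 0| ≤ 1 ∧
        y = s 1 + Real.sqrt (1 - (q 0 - s 0) ^ 2)} := by
      refine ⟨e₃.p₁ 1 + Real.sqrt (1 - (q 0 - e₃.p₁ 0) ^ 2), e₃.p₁, ?_, ?_, rfl⟩
      · simp only [LowerArc.pts, Set.mem_setOf_eq]
        exact ⟨e₃.h₁, le_refl _, h32, e₃.hy₁⟩
      · exact abs_le.mpr ⟨by linarith, by linarith⟩
    obtain ⟨y, hy, hylt⟩ := exists_lt_of_lt_csSup hne3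
      (show q 1 - ε < _ by linarith)
    obtain ⟨s, hs, hxs, rfl⟩ := hy
    have hsmem := hs
    simp only [LowerArc.pts, Set.mem_setOf_eq] at hsmem
    have hsB : |s 0 - o 0| ≤ 1 / (2 * Real.sqrt 2) ∧
        |s 1 - o 1| ≤ 1 / (2 * Real.sqrt 2) := hB₃ hs
    have hfarT : 1 ≤ (s 0 - e₂.c 0) ^ 2 + (s 1 - e₂.c 1) ^ 2 := by
      have h := hfar₃ s hs
      have h2 : 1 ≤ ‖s - e₂.c‖ ^ 2 := by nlinarith [norm_nonneg (s - e₂.c), h]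
      rwa [norm_sq_expr] at h2
    have hTy : s 1 ≤ e₂.c 1 := by
      have := (abs_le.mp hsB.2).2; linarith
    have hTu : e₂.p₁ 0 ≤ s 0 := by linarith [hsmem.2.1]
    have h1s : (q 0 - s 0) ^ 2 ≤ 1 := (sq_le_one_iff_abs_le_one _).mpr hxs
    have h2s : (q 0 - e₂.p₁ 0) ^ 2 ≤ 1 :=
      (sq_le_one_iff_abs_le_one _).mpr (abs_le.mpr ⟨by linarith, by linarith⟩)
    have h3s : (e₂.p₁ 0 - e₂.c 0) ^ 2 ≤ 1 := by
      linarith [sq_nonneg (e₂.p₁ 1 - e₂.c 1), c2p1]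
    have hIL := IL (e₂.c 0) (e₂.c 1) (e₂.p₁ 0) (s 0) (s 1) (q 0)
      hTy hfarT hTu h1s h2s h3s hside
    have hval : Real.sqrt (1 - (e₂.p₁ 0 - e₂.c 0) ^ 2) = e₂.c 1 - e₂.p₁ 1 := by
      have hh : 1 - (e₂.p₁ 0 - e₂.c 0) ^ 2 = (e₂.c 1 - e₂.p₁ 1) ^ 2 := by
        linear_combination -c2p1
      rw [hh, Real.sqrt_sq (by linarith [e₂.hy₁])]
    rw [hval] at hIL
    have hmem : e₂.p₁ 1 + Real.sqrt (1 - (q 0 - e₂.p₁ 0) ^ 2) ∈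
        {y : ℝ | ∃ s ∈ e₂.pts, |q 0 - s 0| ≤ 1 ∧
          y = s 1 + Real.sqrt (1 - (q 0 - s 0) ^ 2)} :=
      ⟨e₂.p₁, hp1mem, abs_le.mpr ⟨by linarith, by linarith⟩, rfl⟩
    have hle2 := le_csSup hbdd hmem
    linarith
end
end

section
/- Let e_i and e_j be lower arcs contained in B with centers c_i, c_j ∈ Q_t, such that the right endpoint of e_i has x-coordinate at most the x-coordinate of the left endpoint of e_j, and let x₀ be the unique abscissa in the intersection of the domains of g_{e_i} and g_{e_j} with g_{e_i}(x₀) = g_{e_j}(x₀). Then for every x < x₀ in both domains, g_{e_i}(x) < g_{e_j}(x), and for every x > x₀ in both domains, g_{e_j}(x) < g_{e_i}(x); that is, on their joint lower envelope the lower curve of e_i appears to the left of the lower curve of e_j exactly when e_i precedes e_j in the x-order. -/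
noncomputable section

/-- The lower curve of a lower arc: the lower boundary of its Minkowski sum
with a closed unit disc. -/
def LowerArc.g (e : LowerArc) (x : ℝ) : ℝ :=
  sInf {y : ℝ | ∃ s ∈ e.pts, |x - s 0| ≤ 1 ∧ y = s 1 - Real.sqrt (1 - (x - s 0) ^ 2)}

/- ---------------------------------------------------------------------------
Auxiliary lemmas
--------------------------------------------------------------------------- -/

/-- Coordinate functions are continuous. -/
private lemma cont_coord (i : Fin 2) : Continuous fun p : E2 => p i :=
  (EuclideanSpace.proj i).continuous

/-- Each coordinate is bounded by the norm. -/
private lemma abs_coord_le (v : E2) (i : Fin 2) : |v i| ≤ ‖v‖ := by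
  rw [EuclideanSpace.norm_eq]
  have h1 : |v i| = Real.sqrt (‖v i‖ ^ 2) := by
    rw [Real.sqrt_sq_eq_abs, abs_norm, Real.norm_eq_abs]
  rw [h1]
  apply Real.sqrt_le_sqrt
  exact Finset.single_le_sum (fun j _ => sq_nonneg ‖v j‖) (Finset.mem_univ i)

/-- Concavity of `u ↦ √(1-u²)` on `[-1,1]`. -/
private lemma conc (a d l : ℝ) (ha : |a| ≤ 1) (hd : |d| ≤ 1)
    (hl0 : 0 ≤ l) (hl1 : l ≤ 1) :
    l * Real.sqrt (1 - a ^ 2) + (1 - l) * Real.sqrt (1 - d ^ 2) ≤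
      Real.sqrt (1 - (l * a + (1 - l) * d) ^ 2) := by
  have ha' := abs_le.mp ha
  have hd' := abs_le.mp hd
  have ha2 : (0:ℝ) ≤ 1 - a ^ 2 := by nlinarith
  have hd2 : (0:ℝ) ≤ 1 - d ^ 2 := by nlinarith
  set A := Real.sqrt (1 - a ^ 2) with hA
  set D := Real.sqrt (1 - d ^ 2) with hD
  have hA0 : 0 ≤ A := Real.sqrt_nonneg _
  have hD0 : 0 ≤ D := Real.sqrt_nonneg _
  have hAsq : A ^ 2 = 1 - a ^ 2 := Real.sq_sqrt ha2
  have hDsq : D ^ 2 = 1 - d ^ 2 := Real.sq_sqrt hd2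
  have hAD : A * D ≤ 1 - a * d := by
    have h1 : A * D = Real.sqrt ((1 - a ^ 2) * (1 - d ^ 2)) :=
      (Real.sqrt_mul ha2 _).symm
    have h2 : (1 - a ^ 2) * (1 - d ^ 2) ≤ (1 - a * d) ^ 2 := by nlinarith [sq_nonneg (a - d)]
    have h3 : Real.sqrt ((1 - a ^ 2) * (1 - d ^ 2)) ≤ Real.sqrt ((1 - a * d) ^ 2) :=
      Real.sqrt_le_sqrt h2
    have h4 : Real.sqrt ((1 - a * d) ^ 2) = |1 - a * d| := Real.sqrt_sq_eq_abs _
    have h5 : |1 - a * d| = 1 - a * d := by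
      rw [abs_of_nonneg]; nlinarith
    rw [h1]; rw [h4, h5] at h3; exact h3
  have hub : l * a + (1 - l) * d ≤ 1 := by nlinarith
  have hlb : (-1:ℝ) ≤ l * a + (1 - l) * d := by nlinarith
  have hy' : (0:ℝ) ≤ 1 - (l * a + (1 - l) * d) ^ 2 := by nlinarith
  have hL0 : 0 ≤ l * A + (1 - l) * D :=
    add_nonneg (mul_nonneg hl0 hA0) (mul_nonneg (by linarith) hD0)
  rw [Real.le_sqrt hL0 hy']
  have h2l : (0:ℝ) ≤ 2 * (l * (1 - l)) := by nlinarith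
  have hexp : (l * A + (1 - l) * D) ^ 2
      = l ^ 2 * (A ^ 2) + (1 - l) ^ 2 * (D ^ 2) + 2 * (l * (1 - l)) * (A * D) := by
    ring
  rw [hexp, hAsq, hDsq]
  nlinarith [mul_le_mul_of_nonneg_left hAD h2l]

/-- The four-point (supermodularity) inequality for `F u = √(1-u²)`. -/
private lemma key4 (a b c d : ℝ) (hab : a ≤ b) (hbd : b ≤ d) (hsum : a + d = b + c)
    (ha : |a| ≤ 1) (hd : |d| ≤ 1) :
    Real.sqrt (1 - a ^ 2) + Real.sqrt (1 - d ^ 2) ≤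
      Real.sqrt (1 - b ^ 2) + Real.sqrt (1 - c ^ 2) := by
  rcases eq_or_lt_of_le (hab.trans hbd) with h | h
  · -- a = d : then a = b = c = d
    have hb : b = a := le_antisymm (h ▸ hbd) hab
    have hc : c = a := by linarith
    rw [hb, hc, ← h]
  · have hda : 0 < d - a := by linarith
    set l := (d - b) / (d - a) with hl
    have hl0 : 0 ≤ l := div_nonneg (by linarith) (by linarith)
    have hl1 : l ≤ 1 := by
      rw [hl, div_le_one hda]; linarith
    have hb : b = l * a + (1 - l) * d := by
      rw [hl]; field_simp; ring
    have hc' : c = (1 - l) * a + l * d := by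
      have : c = a + d - b := by linarith
      rw [this, hb]; ring
    have h1 := conc a d l ha hd hl0 hl1
    have h2 := conc a d (1 - l) ha hd (by linarith) (by linarith)
    rw [← hb] at h1
    have h2' : (1 - l) * Real.sqrt (1 - a ^ 2) + l * Real.sqrt (1 - d ^ 2) ≤
        Real.sqrt (1 - c ^ 2) := by
      have : (1 - (1 - l)) = l := by ring
      rw [this] at h2
      rw [← hc'] at h2
      exact h2
    linarith

/-- Endpoints belong to the arc. -/
private lemma mem_pts₁ (e : LowerArc) : e.p₁ ∈ e.pts :=
  ⟨e.h₁, le_refl _, le_of_lt e.hx, e.hy₁⟩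

private lemma mem_pts₂ (e : LowerArc) : e.p₂ ∈ e.pts :=
  ⟨e.h₂, le_of_lt e.hx, le_refl _, e.hy₂⟩

/-- Width of an arc is at most 2. -/
private lemma width_le (e : LowerArc) : e.p₂ 0 - e.p₁ 0 ≤ 2 := by
  have h1 : |(e.p₂ - e.p₁) 0| ≤ ‖e.p₂ - e.p₁‖ := abs_coord_le _ 0
  have h2 : ‖e.p₂ - e.p₁‖ ≤ 2 := by
    have : e.p₂ - e.p₁ = (e.p₂ - e.c) - (e.p₁ - e.c) := by abel
    rw [this]
    calc ‖(e.p₂ - e.c) - (e.p₁ - e.c)‖ ≤ ‖e.p₂ - e.c‖ + ‖e.p₁ - e.c‖ := norm_sub_le _ _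
    _ = 2 := by rw [e.h₂, e.h₁]; norm_num
  have h3 : (e.p₂ - e.p₁) 0 = e.p₂ 0 - e.p₁ 0 := rfl
  rw [h3] at h1
  calc e.p₂ 0 - e.p₁ 0 ≤ |e.p₂ 0 - e.p₁ 0| := le_abs_self _
  _ ≤ 2 := h1.trans h2

/-- The arc, as a set, is compact. -/
private lemma pts_isCompact (e : LowerArc) : IsCompact e.pts := by
  apply Metric.isCompact_of_isClosed_isBounded
  · have h1 : IsClosed {p : E2 | ‖p - e.c‖ = 1} :=
      isClosed_eq (continuous_id.sub continuous_const).norm continuous_const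
    have h2 : IsClosed {p : E2 | e.p₁ 0 ≤ p 0} :=
      isClosed_le continuous_const (cont_coord 0)
    have h3 : IsClosed {p : E2 | p 0 ≤ e.p₂ 0} :=
      isClosed_le (cont_coord 0) continuous_const
    have h4 : IsClosed {p : E2 | p 1 ≤ e.c 1} :=
      isClosed_le (cont_coord 1) continuous_const
    have : e.pts = {p : E2 | ‖p - e.c‖ = 1} ∩ ({p : E2 | e.p₁ 0 ≤ p 0} ∩
        ({p : E2 | p 0 ≤ e.p₂ 0} ∩ {p : E2 | p 1 ≤ e.c 1})) := by
      ext p; simp [LowerArc.pts, Set.mem_setOf_eq, and_assoc]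
    rw [this]
    exact h1.inter (h2.inter (h3.inter h4))
  · apply Bornology.IsBounded.subset (Metric.isBounded_closedBall (x := e.c) (r := 1))
    intro p hp
    simp only [Metric.mem_closedBall]
    rw [dist_eq_norm]
    exact le_of_eq hp.1

/-- The minimum in the definition of the lower curve is attained. -/
private lemma exists_min (e : LowerArc) {x : ℝ} (hx : x ∈ e.dom) :
    ∃ s ∈ e.pts, |x - s 0| ≤ 1 ∧
      e.g x = s 1 - Real.sqrt (1 - (x - s 0) ^ 2) ∧
      (∀ s' ∈ e.pts, |x - s' 0| ≤ 1 →
        s 1 - Real.sqrt (1 - (x - s 0) ^ 2) ≤ s' 1 - Real.sqrt (1 - (x - s' 0) ^ 2)) := by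
  obtain ⟨hx1, hx2⟩ := hx
  set K := e.pts ∩ {s : E2 | |x - s 0| ≤ 1} with hK
  have hKc : IsCompact K := by
    apply (pts_isCompact e).inter_right
    exact isClosed_le (continuous_const.sub (cont_coord 0)).abs continuous_const
  have hKne : K.Nonempty := by
    by_cases h : x ≤ e.p₁ 0 + 1
    · refine ⟨e.p₁, Set.mem_inter (mem_pts₁ e) ?_⟩
      rw [Set.mem_setOf_eq, abs_le]
      exact ⟨by linarith, by linarith⟩
    · push_neg at h
      have hw := width_le e
      refine ⟨e.p₂, Set.mem_inter (mem_pts₂ e) ?_⟩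
      rw [Set.mem_setOf_eq, abs_le]
      exact ⟨by linarith, by linarith⟩
  have hcont : ContinuousOn (fun s : E2 => s 1 - Real.sqrt (1 - (x - s 0) ^ 2)) K := by
    apply Continuous.continuousOn
    apply (cont_coord 1).sub
    exact Real.continuous_sqrt.comp
      (continuous_const.sub ((continuous_const.sub (cont_coord 0)).pow 2))
  obtain ⟨s, hsK, hmin⟩ := hKc.exists_isMinOn hKne hcont
  refine ⟨s, hsK.1, hsK.2, ?_, ?_⟩
  · have : IsLeast {y : ℝ | ∃ s' ∈ e.pts, |x - s' 0| ≤ 1 ∧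
        y = s' 1 - Real.sqrt (1 - (x - s' 0) ^ 2)}
        (s 1 - Real.sqrt (1 - (x - s 0) ^ 2)) := by
      constructor
      · exact ⟨s, hsK.1, hsK.2, rfl⟩
      · rintro y ⟨s', hs', hxs', rfl⟩
        exact hmin ⟨hs', hxs'⟩
    rw [LowerArc.g]
    exact this.csInf_eq
  · intro s' hs' hxs'
    exact hmin ⟨hs', hxs'⟩

/-- The lower curve is below the value at any admissible arc point. -/
private lemma g_le (e : LowerArc) {x : ℝ} {s : E2} (hs : s ∈ e.pts)
    (hxs : |x - s 0| ≤ 1) :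
    e.g x ≤ s 1 - Real.sqrt (1 - (x - s 0) ^ 2) := by
  apply csInf_le
  · refine ⟨e.c 1 - 2, ?_⟩
    rintro y ⟨s', hs', hxs', rfl⟩
    have h1 : |(s' - e.c) 1| ≤ ‖s' - e.c‖ := abs_coord_le _ 1
    have h2 : (s' - e.c) 1 = s' 1 - e.c 1 := rfl
    rw [h2, hs'.1] at h1
    have h3 : e.c 1 - 1 ≤ s' 1 := by
      have := abs_le.mp h1; linarith
    have h4 : Real.sqrt (1 - (x - s' 0) ^ 2) ≤ 1 :=
      Real.sqrt_le_one.mpr (by nlinarith [sq_nonneg (x - s' 0)])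
    linarith
  · exact ⟨s, hs, hxs, rfl⟩

/-- Before the crossing, the left arc's curve is (weakly) below. -/
private lemma cross_mono_left (ei ej : LowerArc) (hord : ei.p₂ 0 ≤ ej.p₁ 0)
    {x x₀ : ℝ} (hx : x ∈ ei.dom ∩ ej.dom) (hx₀ : x₀ ∈ ei.dom ∩ ej.dom)
    (hxx : x ≤ x₀) (heq : ei.g x₀ = ej.g x₀) : ei.g x ≤ ej.g x := by
  obtain ⟨⟨hxi1, hxi2⟩, ⟨hxj1, hxj2⟩⟩ := hx
  obtain ⟨⟨hx₀i1, hx₀i2⟩, ⟨hx₀j1, hx₀j2⟩⟩ := hx₀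
  -- minimizer of ei at x₀
  obtain ⟨s, hs, hsadm, hsval, -⟩ := exists_min ei (Set.mem_Icc.mpr ⟨hx₀i1, hx₀i2⟩)
  -- minimizer of ej at x
  obtain ⟨t, ht, htadm, htval, -⟩ := exists_min ej (Set.mem_Icc.mpr ⟨hxj1, hxj2⟩)
  have hs2 : s 0 ≤ ei.p₂ 0 := hs.2.2.1
  have ht1 : ej.p₁ 0 ≤ t 0 := ht.2.1
  have hsadm' := abs_le.mp hsadm
  have htadm' := abs_le.mp htadm
  -- s is admissible at x
  have hsx : |x - s 0| ≤ 1 := abs_le.mpr ⟨by linarith, by linarith⟩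
  -- t is admissible at x₀
  have htx₀ : |x₀ - t 0| ≤ 1 := abs_le.mpr ⟨by linarith, by linarith⟩
  have hA : ei.g x ≤ s 1 - Real.sqrt (1 - (x - s 0) ^ 2) := g_le ei hs hsx
  have hB : ej.g x₀ ≤ t 1 - Real.sqrt (1 - (x₀ - t 0) ^ 2) := g_le ej ht htx₀
  have hkey := key4 (x - t 0) (x - s 0) (x₀ - t 0) (x₀ - s 0)
    (by linarith) (by linarith) (by ring)
    (abs_le.mpr ⟨by linarith, by linarith⟩)
    (abs_le.mpr ⟨by linarith, by linarith⟩)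
  rw [htval]
  rw [hsval] at heq
  linarith

/-- After the crossing, the right arc's curve is (weakly) below. -/
private lemma cross_mono_right (ei ej : LowerArc) (hord : ei.p₂ 0 ≤ ej.p₁ 0)
    {x x₀ : ℝ} (hx : x ∈ ei.dom ∩ ej.dom) (hx₀ : x₀ ∈ ei.dom ∩ ej.dom)
    (hxx : x₀ ≤ x) (heq : ei.g x₀ = ej.g x₀) : ej.g x ≤ ei.g x := by
  obtain ⟨⟨hxi1, hxi2⟩, ⟨hxj1, hxj2⟩⟩ := hx
  obtain ⟨⟨hx₀i1, hx₀i2⟩, ⟨hx₀j1, hx₀j2⟩⟩ := hx₀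
  -- minimizer of ej at x₀
  obtain ⟨s, hs, hsadm, hsval, -⟩ := exists_min ej (Set.mem_Icc.mpr ⟨hx₀j1, hx₀j2⟩)
  -- minimizer of ei at x
  obtain ⟨t, ht, htadm, htval, -⟩ := exists_min ei (Set.mem_Icc.mpr ⟨hxi1, hxi2⟩)
  have hs1 : ej.p₁ 0 ≤ s 0 := hs.2.1
  have ht2 : t 0 ≤ ei.p₂ 0 := ht.2.2.1
  have hsadm' := abs_le.mp hsadm
  have htadm' := abs_le.mp htadm
  -- s is admissible at x
  have hsx : |x - s 0| ≤ 1 := abs_le.mpr ⟨by linarith, by linarith⟩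
  -- t is admissible at x₀
  have htx₀ : |x₀ - t 0| ≤ 1 := abs_le.mpr ⟨by linarith, by linarith⟩
  have hA : ej.g x ≤ s 1 - Real.sqrt (1 - (x - s 0) ^ 2) := g_le ej hs hsx
  have hB : ei.g x₀ ≤ t 1 - Real.sqrt (1 - (x₀ - t 0) ^ 2) := g_le ei ht htx₀
  have hkey := key4 (x₀ - s 0) (x₀ - t 0) (x - s 0) (x - t 0)
    (by linarith) (by linarith) (by ring)
    (abs_le.mpr ⟨by linarith, by linarith⟩)
    (abs_le.mpr ⟨by linarith, by linarith⟩)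
  rw [htval]
  rw [hsval] at heq
  linarith

/-- On their joint lower envelope, the lower curve of the left arc appears to
the left of the lower curve of the right arc: strictly below it before the
unique crossing abscissa `x₀`, and strictly above it after. -/
theorem stmt_10 (o : E2) (ei ej : LowerArc)
    (hBi : ei.pts ⊆ Bsq o) (hBj : ej.pts ⊆ Bsq o)
    (hci : ei.c ∈ Qt o) (hcj : ej.c ∈ Qt o)
    (hord : ei.p₂ 0 ≤ ej.p₁ 0)
    (x₀ : ℝ) (hx₀ : x₀ ∈ ei.dom ∩ ej.dom) (heq : ei.g x₀ = ej.g x₀)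
    (huniq : ∀ x ∈ ei.dom ∩ ej.dom, ei.g x = ej.g x → x = x₀) :
    (∀ x ∈ ei.dom ∩ ej.dom, x < x₀ → ei.g x < ej.g x) ∧
    (∀ x ∈ ei.dom ∩ ej.dom, x₀ < x → ej.g x < ei.g x) := by
  constructor
  · intro x hx hlt
    have hle := cross_mono_left ei ej hord hx hx₀ hlt.le heq
    refine lt_of_le_of_ne hle (fun h => ?_)
    exact absurd (huniq x hx h) (ne_of_lt hlt)
  · intro x hx hlt
    have hle := cross_mono_right ei ej hord hx hx₀ hlt.le heq
    refine lt_of_le_of_ne hle (fun h => ?_)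
    exact absurd (huniq x hx h.symm) (ne_of_gt hlt)
end
end
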